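/- Let S ⊂ V with vol(S) ≤ vol(V∖S) and φ(S) ≤ δ. Then for any ℓ ∈ ℕ there exists a vertex v ∈ S such that ‖W^ℓ(v,·) − π‖₂² > (1/(16 m⁷)) · (1 − 4δ)^{2ℓ}. -/

import Mathlib

open Finset Matrix

/-- The lazy random walk matrix of a graph. -/
noncomputable def lazyWalk {V : Type*} [Fintype V] [DecidableEq V] (G : SimpleGraph V)
    [DecidableRel G.Adj] : Matrix V V ℝ :=
  fun u v => if u = v then 1 / 2 else if G.Adj u v then 1 / (2 * (G.degree v : ℝ)) else 0

/-- The volume of a set of vertices: the sum of their degrees. -/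
def gvol {V : Type*} [Fintype V] [DecidableEq V] (G : SimpleGraph V) [DecidableRel G.Adj]
    (S : Finset V) : ℕ :=
  ∑ v ∈ S, G.degree v

/-- The number of edges crossing from `S` to `T` (for disjoint `S`, `T`). -/
def gcut {V : Type*} [Fintype V] [DecidableEq V] (G : SimpleGraph V) [DecidableRel G.Adj]
    (S T : Finset V) : ℕ :=
  ((S ×ˢ T).filter (fun p => G.Adj p.1 p.2)).card

/-!
The walk is reversible: `D⁻¹ W^k` is symmetric, where `D` is the degree matrix. For the test
vector `h = d·𝟙_S − (vol S / 2m) d` (with `d` the degree vector), the sequence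
`a k = ⟨h, D⁻¹ W^k h⟩` is therefore log-convex: `a (k+1)² ≤ a k · a (k+2)` is Cauchy–Schwarz for
the positive semidefinite form `D⁻¹` or `D⁻¹ W = ½ D⁻¹ (D + A) D⁻¹`, according to the parity of `k`.
Since `a 0 = vol S (1 − vol S / 2m) ≥ vol S / 2` and `a 1 = a 0 − |E(S, S̄)| / 2 ≥ (1 − 4δ) a 0`,
log-convexity gives `a ℓ ≥ (1 − 4δ)^ℓ vol S / 2`. Stationarity of `d` turns `a ℓ` into the
`d`-weighted sum over `v ∈ S` of `∑_{u ∈ S} (W^ℓ(u,v) − π(u))`, so one of these inner sums is at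
least `(1 − 4δ)^ℓ / 2`, and Cauchy–Schwarz over the at most `m` vertices of `S` yields
`‖W^ℓ(v,·) − π‖₂² ≥ (1 − 4δ)^{2ℓ} / (4m)`.
-/

theorem pow_mul_le_of_sq_le_mul {a : ℕ → ℝ} {c : ℝ} (hc : 0 < c) (h0 : 0 < a 0)
    (h1 : c * a 0 ≤ a 1) (hlc : ∀ k, a (k + 1) ^ 2 ≤ a k * a (k + 2)) (k : ℕ) :
    c ^ k * a 0 ≤ a k := by
  have ratio : ∀ k, 0 < a k ∧ c * a k ≤ a (k + 1) := by
    intro k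
    induction k with
    | zero => exact ⟨h0, h1⟩
    | succ k ih =>
      obtain ⟨hk, hck⟩ := ih
      have hk1 : 0 < a (k + 1) := (mul_pos hc hk).trans_le hck
      exact ⟨hk1, le_of_mul_le_mul_left (by nlinarith [hlc k]) hk1⟩
  induction k with
  | zero => simp
  | succ k ih =>
    calc c ^ (k + 1) * a 0 = c * (c ^ k * a 0) := by ring
      _ ≤ c * a k := by gcongr
      _ ≤ a (k + 1) := (ratio k).2

theorem Matrix.PosSemidef.sq_dotProduct_mulVec_le {n : Type*} [Fintype n] {M : Matrix n n ℝ}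
    (hM : M.PosSemidef) (x y : n → ℝ) :
    (x ⬝ᵥ M *ᵥ y) ^ 2 ≤ (x ⬝ᵥ M *ᵥ x) * (y ⬝ᵥ M *ᵥ y) := by
  let _ := M.toSeminormedAddCommGroup hM
  let _ := M.toInnerProductSpace hM
  have key := real_inner_mul_inner_self_le x y
  change (M *ᵥ y) ⬝ᵥ star x * ((M *ᵥ y) ⬝ᵥ star x)
    ≤ ((M *ᵥ x) ⬝ᵥ star x) * ((M *ᵥ y) ⬝ᵥ star y) at key
  simpa only [star_trivial, dotProduct_comm _ x, dotProduct_comm _ y, sq] using key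

namespace SimpleGraph

variable {V : Type*} [Fintype V] [DecidableEq V] (G : SimpleGraph V) [DecidableRel G.Adj]

noncomputable def invDegMatrix : Matrix V V ℝ := diagonal fun u => (G.degree u : ℝ)⁻¹

theorem lazyWalk_eq_smul_one_add : lazyWalk G = (1 / 2 : ℝ) • (1 + G.adjMatrix ℝ * G.invDegMatrix) := by
  ext u v
  by_cases huv : u = v
  · subst huv
    simp [lazyWalk, invDegMatrix]
  · by_cases h : G.Adj u v <;> simp [lazyWalk, invDegMatrix, huv, h, one_apply_ne huv, mul_comm]

theorem dotProduct_degMatrix_add_adjMatrix_mulVec (x : V → ℝ) :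
    x ⬝ᵥ (G.degMatrix ℝ + G.adjMatrix ℝ) *ᵥ x
      = (∑ i, ∑ j, if G.Adj i j then (x i + x j) ^ 2 else 0) / 2 := by
  have hdeg : x ⬝ᵥ G.degMatrix ℝ *ᵥ x = ∑ i, ∑ j, if G.Adj i j then x i ^ 2 else 0 := by
    simp_rw [dotProduct_mulVec_degMatrix, degree_eq_sum_if_adj, sum_mul, ite_mul, one_mul,
      zero_mul, sq]
  have hswap : (∑ i, ∑ j, if G.Adj i j then x j ^ 2 else 0)
      = ∑ i, ∑ j, if G.Adj i j then x i ^ 2 else 0 := by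
    rw [Finset.sum_comm]
    simp_rw [G.adj_comm]
  have hexpand : ∀ i j, (if G.Adj i j then (x i + x j) ^ 2 else 0)
      = (if G.Adj i j then x i ^ 2 else 0) + 2 * (if G.Adj i j then x i * x j else 0)
        + (if G.Adj i j then x j ^ 2 else 0) := by
    intro i j
    split_ifs <;> ring
  simp_rw [add_mulVec, dotProduct_add, hdeg, dotProduct_mulVec_adjMatrix, hexpand,
    sum_add_distrib, ← mul_sum, hswap]
  ring

theorem posSemidef_degMatrix_add_adjMatrix : (G.degMatrix ℝ + G.adjMatrix ℝ).PosSemidef := by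
  refine .of_dotProduct_mulVec_nonneg ((G.isHermitian_degMatrix ℝ).add (G.isHermitian_adjMatrix ℝ))
    fun x => ?_
  rw [star_trivial, dotProduct_degMatrix_add_adjMatrix_mulVec]
  positivity

theorem invDegMatrix_mul_lazyWalk :
    G.invDegMatrix * lazyWalk G
      = (1 / 2 : ℝ) • (G.invDegMatrix + G.invDegMatrix * G.adjMatrix ℝ * G.invDegMatrix) := by
  rw [lazyWalk_eq_smul_one_add, mul_smul_comm, mul_add, mul_one, Matrix.mul_assoc]

theorem transpose_invDegMatrix : G.invDegMatrixᵀ = G.invDegMatrix := diagonal_transpose _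

theorem posSemidef_invDegMatrix : G.invDegMatrix.PosSemidef :=
  PosSemidef.diagonal fun _ => inv_nonneg.2 (Nat.cast_nonneg _)

theorem invDegMatrix_mul_degMatrix (hd : ∀ u, 0 < G.degree u) :
    G.invDegMatrix * G.degMatrix ℝ = 1 := by
  rw [invDegMatrix, degMatrix, diagonal_mul_diagonal, ← diagonal_one]
  exact congrArg diagonal (funext fun u => inv_mul_cancel₀ (Nat.cast_ne_zero.2 (hd u).ne'))

theorem posSemidef_invDegMatrix_mul_lazyWalk (hd : ∀ u, 0 < G.degree u) :
    (G.invDegMatrix * lazyWalk G).PosSemidef := by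
  have h : G.invDegMatrix * lazyWalk G
      = (1 / 2 : ℝ) • (G.invDegMatrixᴴ * (G.degMatrix ℝ + G.adjMatrix ℝ) * G.invDegMatrix) := by
    rw [invDegMatrix_mul_lazyWalk, conjTranspose_eq_transpose_of_trivial, transpose_invDegMatrix,
      mul_add, add_mul, invDegMatrix_mul_degMatrix G hd, one_mul]
  rw [h]
  exact (G.posSemidef_degMatrix_add_adjMatrix.conjTranspose_mul_mul_same _).smul (by norm_num)

theorem transpose_lazyWalk_pow_mul_invDegMatrix (k : ℕ) :
    (lazyWalk G ^ k)ᵀ * G.invDegMatrix = G.invDegMatrix * lazyWalk G ^ k := by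
  have h1 : (lazyWalk G)ᵀ * G.invDegMatrix = G.invDegMatrix * lazyWalk G := by
    have h := congrArg transpose G.invDegMatrix_mul_lazyWalk
    rw [transpose_mul, transpose_invDegMatrix, ← G.invDegMatrix_mul_lazyWalk] at h
    rw [h, invDegMatrix_mul_lazyWalk, transpose_smul, transpose_add, transpose_mul, transpose_mul,
      transpose_adjMatrix, transpose_invDegMatrix, Matrix.mul_assoc]
  induction k with
  | zero => simp
  | succ k ih =>
    rw [pow_succ, transpose_mul, Matrix.mul_assoc, ih, ← Matrix.mul_assoc, h1, Matrix.mul_assoc,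
      ← pow_succ', ← pow_succ]

noncomputable def degVec : V → ℝ := fun u => G.degree u

theorem invDegMatrix_mulVec_degVec (hd : ∀ u, 0 < G.degree u) :
    G.invDegMatrix *ᵥ G.degVec = fun _ => 1 := by
  funext u
  simp [invDegMatrix, degVec, mulVec_diagonal, (hd u).ne']

theorem lazyWalk_mulVec_degVec (hd : ∀ u, 0 < G.degree u) :
    lazyWalk G *ᵥ G.degVec = G.degVec := by
  rw [lazyWalk_eq_smul_one_add, smul_mulVec, add_mulVec, one_mulVec, ← mulVec_mulVec,
    invDegMatrix_mulVec_degVec G hd]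
  funext u
  simp only [Pi.smul_apply, Pi.add_apply, degVec, adjMatrix_mulVec_apply, sum_const,
    card_neighborFinset_eq_degree, nsmul_eq_mul, mul_one, smul_eq_mul]
  ring

theorem lazyWalk_pow_mulVec_degVec (hd : ∀ u, 0 < G.degree u) (k : ℕ) :
    lazyWalk G ^ k *ᵥ G.degVec = G.degVec := by
  induction k with
  | zero => simp
  | succ k ih => rw [pow_succ', ← mulVec_mulVec, ih, lazyWalk_mulVec_degVec G hd]

noncomputable def walkForm (k : ℕ) (x y : V → ℝ) : ℝ :=
  x ⬝ᵥ (G.invDegMatrix * lazyWalk G ^ k) *ᵥ y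

theorem walkForm_lazyWalk_pow_mulVec (i j k : ℕ) (x y : V → ℝ) :
    G.walkForm j (lazyWalk G ^ i *ᵥ x) (lazyWalk G ^ k *ᵥ y) = G.walkForm (i + j + k) x y := by
  rw [walkForm, walkForm, mulVec_mulVec, Matrix.mul_assoc, ← pow_add, ← vecMul_transpose,
    ← dotProduct_mulVec, mulVec_mulVec, ← Matrix.mul_assoc, transpose_lazyWalk_pow_mul_invDegMatrix,
    Matrix.mul_assoc, ← pow_add, ← add_assoc]

theorem walkForm_comm (k : ℕ) (x y : V → ℝ) : G.walkForm k x y = G.walkForm k y x := by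
  rw [walkForm, walkForm, dotProduct_mulVec, ← mulVec_transpose, transpose_mul,
    transpose_invDegMatrix, transpose_lazyWalk_pow_mul_invDegMatrix, dotProduct_comm]

theorem walkForm_sq_le (hd : ∀ u, 0 < G.degree u) (x : V → ℝ) (k : ℕ) :
    G.walkForm (k + 1) x x ^ 2 ≤ G.walkForm k x x * G.walkForm (k + 2) x x := by
  have key : ∀ p j, (G.invDegMatrix * lazyWalk G ^ p).PosSemidef →
      G.walkForm (2 * j + p + 1) x x ^ 2
        ≤ G.walkForm (2 * j + p) x x * G.walkForm (2 * j + p + 2) x x := by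
    intro p j hP
    have h : G.walkForm p (lazyWalk G ^ j *ᵥ x) (lazyWalk G ^ (j + 1) *ᵥ x) ^ 2
        ≤ G.walkForm p (lazyWalk G ^ j *ᵥ x) (lazyWalk G ^ j *ᵥ x)
          * G.walkForm p (lazyWalk G ^ (j + 1) *ᵥ x) (lazyWalk G ^ (j + 1) *ᵥ x) :=
      hP.sq_dotProduct_mulVec_le _ _
    simp only [walkForm_lazyWalk_pow_mulVec] at h
    convert h using 3 <;> ring_nf
  obtain ⟨j, rfl | rfl⟩ := Nat.even_or_odd' k
  · simpa using key 0 j (by simpa using G.posSemidef_invDegMatrix)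
  · simpa using key 1 j (by simpa using G.posSemidef_invDegMatrix_mul_lazyWalk hd)

theorem walkForm_degVec (hd : ∀ u, 0 < G.degree u) (k : ℕ) (x : V → ℝ) :
    G.walkForm k x G.degVec = ∑ u, x u := by
  rw [walkForm, ← mulVec_mulVec, lazyWalk_pow_mulVec_degVec G hd, invDegMatrix_mulVec_degVec G hd]
  simp [dotProduct]

theorem gcut_eq_sum (S T : Finset V) :
    (gcut G S T : ℝ) = ∑ u ∈ S, ∑ v ∈ T, if G.Adj u v then 1 else 0 := by
  rw [gcut, card_filter, sum_product]
  push_cast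
  rfl

theorem gcut_add_gcut_compl (S : Finset V) : gcut G S S + gcut G S Sᶜ = gvol G S := by
  simp only [gcut, card_filter, sum_product, ← sum_add_distrib, gvol]
  refine sum_congr rfl fun u _ => ?_
  rw [sum_add_sum_compl]
  exact_mod_cast (G.degree_eq_sum_if_adj (R := ℕ) u).symm

variable (S : Finset V)

theorem gvol_add_gvol_compl : gvol G S + gvol G Sᶜ = 2 * #G.edgeFinset := by
  rw [gvol, gvol, sum_add_sum_compl, sum_degrees_eq_twice_card_edges]

theorem card_le_gvol (hd : ∀ u, 0 < G.degree u) : #S ≤ gvol G S := by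
  rw [card_eq_sum_ones, gvol]
  exact sum_le_sum fun u _ => hd u

theorem gvol_pos (hd : ∀ u, 0 < G.degree u) (hS : S.Nonempty) : 0 < gvol G S :=
  sum_pos (fun u _ => hd u) hS

noncomputable def degVecOn : V → ℝ := fun u => if u ∈ S then (G.degree u : ℝ) else 0

theorem sum_degVecOn : ∑ u, G.degVecOn S u = gvol G S := by
  simp [degVecOn, gvol]

theorem walkForm_degVecOn (hd : ∀ u, 0 < G.degree u) (k : ℕ) :
    G.walkForm k (G.degVecOn S) (G.degVecOn S)
      = ∑ u ∈ S, ∑ v ∈ S, (lazyWalk G ^ k) u v * G.degree v := by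
  have hx : ∀ w : V → ℝ, G.degVecOn S ⬝ᵥ G.invDegMatrix *ᵥ w = ∑ u ∈ S, w u := by
    intro w
    simp [dotProduct, invDegMatrix, mulVec_diagonal, degVecOn, ite_mul, (hd _).ne']
  rw [walkForm, ← mulVec_mulVec, hx]
  simp [mulVec, dotProduct, degVecOn, mul_ite]

noncomputable def testVec : V → ℝ :=
  G.degVecOn S - ((gvol G S : ℝ) / (2 * #G.edgeFinset)) • G.degVec

theorem walkForm_testVec (hd : ∀ u, 0 < G.degree u) (k : ℕ) :
    G.walkForm k (G.testVec S) (G.testVec S)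
      = ∑ u ∈ S, ∑ v ∈ S, (lazyWalk G ^ k) u v * G.degree v
        - (gvol G S : ℝ) ^ 2 / (2 * #G.edgeFinset) := by
  have hxd := G.walkForm_degVec hd k (G.degVecOn S)
  have hdx : G.walkForm k G.degVec (G.degVecOn S) = gvol G S := by
    rw [walkForm_comm, hxd, sum_degVecOn]
  have hdd : G.walkForm k G.degVec G.degVec = 2 * #G.edgeFinset := by
    rw [walkForm_degVec G hd]
    unfold degVec
    exact_mod_cast G.sum_degrees_eq_twice_card_edges
  rw [sum_degVecOn] at hxd
  rw [← walkForm_degVecOn G S hd]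
  simp only [walkForm] at hxd hdx hdd ⊢
  rw [testVec, mulVec_sub, mulVec_smul, dotProduct_sub, sub_dotProduct, sub_dotProduct,
    dotProduct_smul, smul_dotProduct, smul_dotProduct, dotProduct_smul, hxd, hdx, hdd, smul_eq_mul,
    smul_eq_mul, smul_eq_mul]
  rcases eq_or_ne (#G.edgeFinset : ℝ) 0 with h0 | h0
  · simp [h0]
  · field_simp
    ring

theorem walkForm_zero_testVec (hd : ∀ u, 0 < G.degree u) :
    G.walkForm 0 (G.testVec S) (G.testVec S)
      = gvol G S - (gvol G S : ℝ) ^ 2 / (2 * #G.edgeFinset) := by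
  rw [walkForm_testVec G S hd, pow_zero]
  simp [one_apply, gvol]

theorem sum_sum_lazyWalk_mul_degree (hd : ∀ u, 0 < G.degree u) :
    ∑ u ∈ S, ∑ v ∈ S, lazyWalk G u v * G.degree v = gvol G S - gcut G S Sᶜ / 2 := by
  have hterm : ∀ u v, lazyWalk G u v * G.degree v
      = (if u = v then (G.degree v : ℝ) / 2 else 0) + (if G.Adj u v then 1 else 0) / 2 := by
    intro u v
    by_cases huv : u = v
    · subst huv
      simp only [lazyWalk, ↓reduceIte, SimpleGraph.irrefl, zero_div, add_zero]
      ring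
    · by_cases h : G.Adj u v
      · simp only [lazyWalk, huv, ↓reduceIte, h, one_div, _root_.mul_inv_rev, zero_add]
        field_simp [Nat.cast_ne_zero.2 (hd v).ne']
      · simp [lazyWalk, huv, h]
  simp_rw [hterm, sum_add_distrib, ← sum_div, ← gcut_eq_sum]
  have hvol : (gcut G S S : ℝ) + gcut G S Sᶜ = gvol G S := by
    exact_mod_cast G.gcut_add_gcut_compl S
  simp only [gvol, Nat.cast_sum] at hvol ⊢
  simp only [sum_ite_eq, sum_ite_mem, inter_self, ← sum_div]
  linarith

theorem walkForm_one_testVec (hd : ∀ u, 0 < G.degree u) :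
    G.walkForm 1 (G.testVec S) (G.testVec S)
      = G.walkForm 0 (G.testVec S) (G.testVec S) - gcut G S Sᶜ / 2 := by
  rw [walkForm_testVec G S hd, pow_one, sum_sum_lazyWalk_mul_degree G S hd,
    walkForm_zero_testVec G S hd]
  ring

theorem exists_mem_walkForm_testVec_div_le (hd : ∀ u, 0 < G.degree u) (hS : S.Nonempty) (k : ℕ) :
    ∃ v ∈ S, G.walkForm k (G.testVec S) (G.testVec S) / gvol G S
      ≤ ∑ u ∈ S, ((lazyWalk G ^ k) u v - G.degree u / (2 * #G.edgeFinset)) := by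
  have hvol : 0 < (gvol G S : ℝ) := Nat.cast_pos.2 (G.gvol_pos S hd hS)
  have hsum : ∑ v ∈ S, (G.degree v : ℝ) * (G.walkForm k (G.testVec S) (G.testVec S) / gvol G S)
      = ∑ v ∈ S, (G.degree v : ℝ)
          * ∑ u ∈ S, ((lazyWalk G ^ k) u v - G.degree u / (2 * #G.edgeFinset)) := by
    have hrhs : ∑ v ∈ S, (G.degree v : ℝ)
          * ∑ u ∈ S, ((lazyWalk G ^ k) u v - G.degree u / (2 * #G.edgeFinset))
        = ∑ u ∈ S, ∑ v ∈ S, (lazyWalk G ^ k) u v * G.degree v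
          - (gvol G S : ℝ) ^ 2 / (2 * #G.edgeFinset) := by
      simp only [sum_sub_distrib, mul_sub, mul_sum, gvol, Nat.cast_sum]
      rw [sum_comm]
      simp only [← mul_sum, ← sum_div, ← sum_mul, mul_comm (G.degree _ : ℝ)]
      ring
    rw [hrhs, ← sum_mul, walkForm_testVec G S hd]
    simp only [gvol, Nat.cast_sum] at hvol ⊢
    field_simp
  obtain ⟨v, hv, hle⟩ := exists_le_of_sum_le hS hsum.le
  exact ⟨v, hv, le_of_mul_le_mul_left hle (Nat.cast_pos.2 (hd v))⟩

theorem gvol_le_card_edgeFinset (hvol : gvol G S ≤ gvol G Sᶜ) : gvol G S ≤ #G.edgeFinset := by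
  have := G.gvol_add_gvol_compl S
  omega

theorem pow_mul_le_walkForm_testVec (hd : ∀ u, 0 < G.degree u) (hS : S.Nonempty)
    (hvol : gvol G S ≤ gvol G Sᶜ) {δ : ℝ} (hδ : δ < 1 / 4)
    (hφ : (gcut G S Sᶜ : ℝ) ≤ δ * gvol G S) (k : ℕ) :
    (1 - 4 * δ) ^ k * (gvol G S / 2) ≤ G.walkForm k (G.testVec S) (G.testVec S) := by
  set a := fun k => G.walkForm k (G.testVec S) (G.testVec S)
  have hvS : 0 < (gvol G S : ℝ) := Nat.cast_pos.2 (G.gvol_pos S hd hS)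
  have hvSE : (gvol G S : ℝ) ≤ #G.edgeFinset := by
    exact_mod_cast G.gvol_le_card_edgeFinset S hvol
  have ha0 : (gvol G S : ℝ) / 2 ≤ a 0 := by
    have h : (gvol G S : ℝ) ^ 2 / (2 * #G.edgeFinset) ≤ gvol G S / 2 := by
      rw [div_le_iff₀ (mul_pos two_pos (hvS.trans_le hvSE))]
      nlinarith
    show _ ≤ G.walkForm 0 _ _
    rw [G.walkForm_zero_testVec S hd]
    linarith
  have hδ0 : 0 ≤ δ := le_of_mul_le_mul_right (by simpa using (Nat.cast_nonneg _).trans hφ) hvS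
  have ha1 : (1 - 4 * δ) * a 0 ≤ a 1 := by
    show _ ≤ G.walkForm 1 _ _
    rw [G.walkForm_one_testVec S hd]
    nlinarith [mul_le_mul_of_nonneg_left ha0 hδ0]
  calc (1 - 4 * δ) ^ k * (gvol G S / 2) ≤ (1 - 4 * δ) ^ k * a 0 :=
        mul_le_mul_of_nonneg_left ha0 (pow_nonneg (by linarith) k)
    _ ≤ a k := pow_mul_le_of_sq_le_mul (by linarith) (by linarith) ha1
        (fun j => G.walkForm_sq_le hd _ j) k

theorem exists_mem_pow_le_sum_lazyWalk_pow_sub (hd : ∀ u, 0 < G.degree u) (hS : S.Nonempty)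
    (hvol : gvol G S ≤ gvol G Sᶜ) {δ : ℝ} (hδ : δ < 1 / 4)
    (hφ : (gcut G S Sᶜ : ℝ) ≤ δ * gvol G S) (k : ℕ) :
    ∃ v ∈ S, (1 - 4 * δ) ^ k / 2
      ≤ ∑ u ∈ S, ((lazyWalk G ^ k) u v - G.degree u / (2 * #G.edgeFinset)) := by
  obtain ⟨v, hv, hle⟩ := G.exists_mem_walkForm_testVec_div_le S hd hS k
  refine ⟨v, hv, le_trans ?_ hle⟩
  rw [le_div_iff₀ (Nat.cast_pos.2 (G.gvol_pos S hd hS))]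
  linarith [G.pow_mul_le_walkForm_testVec S hd hS hvol hδ hφ k]

end SimpleGraph

theorem sq_sum_le_mul_sum_sq {ι : Type*} [Fintype ι] (s : Finset ι) (f : ι → ℝ) {E : ℝ}
    (hs : #s ≤ E) : (∑ i ∈ s, f i) ^ 2 ≤ E * ∑ i, f i ^ 2 :=
  calc _ ≤ #s * ∑ i ∈ s, f i ^ 2 := sq_sum_le_card_mul_sum_sq
    _ ≤ E * ∑ i, f i ^ 2 := mul_le_mul hs (sum_le_univ_sum_of_nonneg fun _ => sq_nonneg _)
        (sum_nonneg fun _ _ => sq_nonneg _) ((Nat.cast_nonneg _).trans hs)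

theorem stmt7_general {V : Type*} [Fintype V] [DecidableEq V] (G : SimpleGraph V) [DecidableRel G.Adj]
    (hconn : G.Connected) (m : ℕ) (hm : m = G.edgeFinset.card)
    (δ : ℝ) (hδ : δ < 1 / 4)
    (S : Finset V) (hS : S.Nonempty) (hSproper : S ≠ Finset.univ)
    (hvol : gvol G S ≤ gvol G Sᶜ)
    (hφ : (gcut G S Sᶜ : ℝ) ≤ δ * (gvol G S : ℝ)) (ℓ : ℕ) :
    ∃ v ∈ S, 1 / (16 * (m : ℝ) ^ 7) * (1 - 4 * δ) ^ (2 * ℓ)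
      < ∑ u, ((lazyWalk G ^ ℓ) u v - (G.degree u : ℝ) / (2 * (m : ℝ))) ^ 2 := by
  subst hm
  obtain ⟨t, ht⟩ : ∃ t, t ∉ S := by simpa [eq_univ_iff_forall] using hSproper
  have : Nontrivial V := ⟨hS.choose, t, fun h => ht (h ▸ hS.choose_spec)⟩
  have hd : ∀ u, 0 < G.degree u := fun u => hconn.preconnected.degree_pos_of_nontrivial u
  obtain ⟨v, hv, hmean⟩ := G.exists_mem_pow_le_sum_lazyWalk_pow_sub S hd hS hvol hδ hφ ℓ
  refine ⟨v, hv, ?_⟩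
  have hcard : (#S : ℝ) ≤ #G.edgeFinset := by
    exact_mod_cast (G.card_le_gvol S hd).trans (G.gvol_le_card_edgeFinset S hvol)
  set E : ℝ := (#G.edgeFinset : ℝ)
  have hE : 1 ≤ E := le_trans (by exact_mod_cast hS.card_pos) hcard
  have hE7 : 4 * E < 16 * E ^ 7 := by nlinarith [one_le_pow₀ (n := 6) hE]
  have hc : 0 < (1 - 4 * δ) ^ ℓ := pow_pos (by linarith) ℓ
  calc 1 / (16 * E ^ 7) * (1 - 4 * δ) ^ (2 * ℓ) < (1 - 4 * δ) ^ (2 * ℓ) / (4 * E) := by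
        rw [one_div_mul_eq_div]
        exact div_lt_div_of_pos_left (pow_pos (by linarith) _) (by positivity) hE7
    _ = ((1 - 4 * δ) ^ ℓ / 2) ^ 2 / E := by ring
    _ ≤ (∑ u ∈ S, ((lazyWalk G ^ ℓ) u v - G.degree u / (2 * E))) ^ 2 / E := by gcongr
    _ ≤ _ := (div_le_iff₀' (by positivity)).2 (sq_sum_le_mul_sum_sq S _ hcard)

/-- If `S ⊂ V` has `vol S ≤ vol S̄` and `φ(S) ≤ δ`, then for any `ℓ` there exists `v ∈ S`
with `‖W^ℓ(v,·) − π‖₂² > (1/(16 m⁷)) (1 − 4δ)^{2ℓ}`. -/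
theorem stmt7 {V : Type*} [Fintype V] [DecidableEq V] (G : SimpleGraph V) [DecidableRel G.Adj]
    (hconn : G.Connected) (m : ℕ) (hm : m = G.edgeFinset.card) (hm1 : 1 ≤ m)
    (δ : ℝ) (hδ0 : 0 < δ) (hδ : δ < 1 / 4)
    (S : Finset V) (hS : S.Nonempty) (hSproper : S ≠ Finset.univ)
    (hvol : gvol G S ≤ gvol G Sᶜ)
    (hφ : (gcut G S Sᶜ : ℝ) ≤ δ * (gvol G S : ℝ)) (ℓ : ℕ) :
    ∃ v ∈ S, 1 / (16 * (m : ℝ) ^ 7) * (1 - 4 * δ) ^ (2 * ℓ)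
      < ∑ u, ((lazyWalk G ^ ℓ) u v - (G.degree u : ℝ) / (2 * (m : ℝ))) ^ 2 :=
  stmt7_general G hconn m hm δ hδ S hS hSproper hvol hφ ℓ
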